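/- Fix a real number b > 1 and an integer d ≥ 1, and define the key polynomial K_d(z) = Σ_{i=0}^d C(d, i) b^{−C(d−i, 2) − C(i, 2)} z^i. Then K_d has exactly d roots, all of which are simple, real and negative; writing the roots as 0 > z_1 > z_2 > ⋯ > z_d, consecutive roots satisfy z_{i+1}/z_i > b² for all 1 ≤ i ≤ d − 1, and the root of largest value (smallest absolute value) satisfies |z_1| ≤ b^{−(d−1)}. -/
import Mathlib


open Finset
open Polynomial

/-- The key polynomial of the Ising model on line graphs:
`K_d(z) = Σ_{i=0}^d C(d,i) b^{-C(d-i,2)-C(i,2)} z^i`. -/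
noncomputable def keyIsing (b : ℝ) (d : ℕ) (z : ℂ) : ℂ :=
  ∑ i ∈ Finset.range (d + 1),
    (d.choose i : ℂ) * (b : ℂ) ^ (-(((d - i).choose 2 + i.choose 2 : ℕ) : ℤ)) * z ^ i



noncomputable def fI (b : ℝ) (d : ℕ) (x : ℝ) : ℝ :=
  ∑ i ∈ Finset.range (d + 1), (d.choose i : ℝ) * b ^ (i * (d - i)) * x ^ i

lemma fI_rec (b : ℝ) (hb : 0 < b) (d : ℕ) (x : ℝ) :
    fI b (d + 1) x = fI b d (b * x) + b ^ d * x * fI b d (x / b) := by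
  have h1 : fI b d (b * x)
      = ∑ i ∈ Finset.range (d + 1), (d.choose i : ℝ) * b ^ (i * (d + 1 - i)) * x ^ i := by
    unfold fI
    refine Finset.sum_congr rfl fun i hi => ?_
    have hid : i ≤ d := Nat.lt_succ_iff.mp (Finset.mem_range.mp hi)
    have h : d + 1 - i = (d - i) + 1 := by omega
    rw [h, Nat.mul_succ, pow_add, mul_pow]
    ring
  have h2 : b ^ d * x * fI b d (x / b)
      = ∑ j ∈ Finset.range (d + 1), (d.choose j : ℝ) * b ^ ((j+1) * (d + 1 - (j+1))) * x ^ (j+1) := by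
    unfold fI
    rw [Finset.mul_sum]
    refine Finset.sum_congr rfl fun j hj => ?_
    have hjd : j ≤ d := Nat.lt_succ_iff.mp (Finset.mem_range.mp hj)
    have h : d + 1 - (j + 1) = d - j := by omega
    rw [h, Nat.succ_mul, pow_add]
    have hbj : (b:ℝ) ^ j ≠ 0 := pow_ne_zero _ (ne_of_gt hb)
    have hdj : b ^ (d - j) = b ^ d / b ^ j := by
      rw [eq_div_iff hbj, ← pow_add]; congr 1; omega
    rw [div_pow, hdj]
    field_simp
    ring
  rw [h1, h2]
  show ∑ i ∈ Finset.range (d + 1 + 1), ((d+1).choose i : ℝ) * b ^ (i * (d + 1 - i)) * x ^ i = _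
  rw [Finset.sum_range_succ' (fun i => ((d+1).choose i : ℝ) * b ^ (i * (d + 1 - i)) * x ^ i)]
  have h5 : ∀ k ∈ Finset.range (d+1), ((d+1).choose (k+1) : ℝ) * b ^ ((k+1) * (d + 1 - (k+1))) * x ^ (k+1)
      = (d.choose k : ℝ) * b ^ ((k+1) * (d + 1 - (k+1))) * x ^ (k+1)
        + (d.choose (k+1) : ℝ) * b ^ ((k+1) * (d + 1 - (k+1))) * x ^ (k+1) := by
    intro k _
    rw [Nat.choose_succ_succ]
    push_cast
    ring
  rw [Finset.sum_congr rfl h5, Finset.sum_add_distrib]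
  have h3 : ∑ k ∈ Finset.range (d + 1),
      (d.choose (k+1) : ℝ) * b ^ ((k+1) * (d + 1 - (k+1))) * x ^ (k+1)
      = ∑ k ∈ Finset.range d,
      (d.choose (k+1) : ℝ) * b ^ ((k+1) * (d + 1 - (k+1))) * x ^ (k+1) := by
    rw [Finset.sum_range_succ]
    simp
  have h4 : ∑ i ∈ Finset.range (d + 1), (d.choose i : ℝ) * b ^ (i * (d + 1 - i)) * x ^ i
      = (∑ k ∈ Finset.range d,
        (d.choose (k+1) : ℝ) * b ^ ((k+1) * (d + 1 - (k+1))) * x ^ (k+1)) + 1 := by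
    rw [Finset.sum_range_succ' (fun i => ((d).choose i : ℝ) * b ^ (i * (d + 1 - i)) * x ^ i)]
    simp
  rw [h3, h4]
  simp only [Nat.choose_zero_right, Nat.cast_one, pow_zero, one_mul, mul_one, Nat.zero_mul,
    Nat.mul_zero]
  ring


lemma card_filter_lt_fin (d k : ℕ) (hk : k ≤ d) :
    ((Finset.univ : Finset (Fin d)).filter (fun j : Fin d => (j : ℕ) < k)).card = k := by
  rw [Finset.card_filter]
  rw [Fin.sum_univ_eq_sum_range (fun j => if j < k then 1 else 0)]
  rw [Finset.sum_ite, Finset.sum_const, Finset.sum_const]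
  have : (Finset.range d).filter (· < k) = Finset.range k := by
    ext m; simp [Finset.mem_filter, Finset.mem_range]; omega
  simp [this]

lemma prod_sign {d : ℕ} (y : Fin d → ℝ) (x : ℝ) (k : ℕ) (hk : k ≤ d)
    (h1 : ∀ j : Fin d, k ≤ (j : ℕ) → y j < x)
    (h2 : ∀ j : Fin d, (j : ℕ) < k → x < y j) :
    0 < (-1 : ℝ) ^ k * ∏ i, (x - y i) := by
  classical
  rw [← Finset.prod_filter_mul_prod_filter_not Finset.univ (fun j : Fin d => (j : ℕ) < k)
    (fun i => x - y i)]
  have hc : ∀ j ∈ (Finset.univ : Finset (Fin d)).filter (fun j : Fin d => (j : ℕ) < k),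
      x - y j = (-1) * (y j - x) := by intro j _; ring
  rw [Finset.prod_congr rfl hc, Finset.prod_mul_distrib, Finset.prod_const,
    card_filter_lt_fin d k hk, ← mul_assoc, ← mul_assoc, ← mul_pow]
  simp only [neg_mul_neg, one_mul, one_pow]
  apply mul_pos
  · apply Finset.prod_pos
    intro j hj
    simp only [Finset.mem_filter] at hj
    linarith [h2 j hj.2]
  · apply Finset.prod_pos
    intro j hj
    simp only [Finset.mem_filter, Finset.mem_univ, true_and, not_lt] at hj
    linarith [h1 j hj]

noncomputable def PI (b : ℝ) (d : ℕ) : Polynomial ℝ :=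
  ∑ i ∈ Finset.range (d + 1), Polynomial.C ((d.choose i : ℝ) * b ^ (i * (d - i))) * Polynomial.X ^ i

lemma PI_eval (b : ℝ) (d : ℕ) (x : ℝ) : (PI b d).eval x = fI b d x := by
  unfold PI fI
  simp [Polynomial.eval_finset_sum]

lemma PI_coeff_top (b : ℝ) (d : ℕ) : (PI b d).coeff d = 1 := by
  unfold PI
  rw [Polynomial.finset_sum_coeff]
  simp only [Polynomial.coeff_C_mul, Polynomial.coeff_X_pow]
  rw [Finset.sum_eq_single d]
  · simp
  · intro i hi hne
    simp [Ne.symm hne]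
  · intro h
    exact absurd (Finset.self_mem_range_succ d) h

lemma PI_natDegree_le (b : ℝ) (d : ℕ) : (PI b d).natDegree ≤ d := by
  unfold PI
  refine le_trans (Polynomial.natDegree_sum_le _ _) ?_
  rw [Finset.fold_max_le]
  refine ⟨Nat.zero_le _, fun i hi => ?_⟩
  refine le_trans (Polynomial.natDegree_C_mul_le _ _) ?_
  simp only [Polynomial.natDegree_X_pow]
  exact Nat.lt_succ_iff.mp (Finset.mem_range.mp hi)

lemma fI_factor {n : ℕ} (b : ℝ) (z : Fin n → ℝ) (hinj : Function.Injective z)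
    (hroot : ∀ i, fI b n (z i) = 0) : ∀ x : ℝ, fI b n x = ∏ i, (x - z i) := by
  classical
  set R : Polynomial ℝ := ∏ i : Fin n, (Polynomial.X - Polynomial.C (z i)) with hR
  have hmR : R.Monic := monic_prod_of_monic _ _ (fun i _ => monic_X_sub_C _)
  have hdR : R.natDegree = n := by
    rw [hR, Polynomial.natDegree_prod]
    · simp
    · intro i _
      exact Polynomial.X_sub_C_ne_zero _
  set Q : Polynomial ℝ := PI b n - R with hQ
  have hQroot : ∀ i : Fin n, Q.eval (z i) = 0 := by
    intro i
    rw [hQ, Polynomial.eval_sub, PI_eval, hroot i, hR]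
    rw [Polynomial.eval_prod]
    rw [Finset.prod_eq_zero (Finset.mem_univ i)]
    · ring
    · simp
  have hQ0 : Q = 0 := by
    by_cases h0 : Q = 0
    · exact h0
    have hle : Q.natDegree ≤ n := by
      refine le_trans (Polynomial.natDegree_sub_le _ _) ?_
      simp [PI_natDegree_le b n, hdR]
    have hcoeff : Q.coeff n = 0 := by
      rw [hQ, Polynomial.coeff_sub, PI_coeff_top]
      have : R.coeff n = 1 := by
        have := hmR.coeff_natDegree
        rwa [hdR] at this
      rw [this]; ring
    have hlt : Q.natDegree < n := by
      rcases lt_or_eq_of_le hle with h | h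
      · exact h
      · exfalso
        apply h0
        apply Polynomial.leadingCoeff_eq_zero.mp
        rw [Polynomial.leadingCoeff, h]
        exact hcoeff
    exact Polynomial.eq_zero_of_natDegree_lt_card_of_eval_eq_zero Q hinj hQroot
      (by simpa using hlt)
  intro x
  have h := congrArg (Polynomial.eval x) hQ0
  rw [hQ, Polynomial.eval_sub, PI_eval, hR, Polynomial.eval_prod, Polynomial.eval_zero] at h
  simp only [Polynomial.eval_sub, Polynomial.eval_X, Polynomial.eval_C] at h
  linarith [h]

lemma fI_zero (b : ℝ) (d : ℕ) : fI b d 0 = 1 := by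
  unfold fI
  rw [Finset.sum_range_succ']
  simp

lemma fI_one (b : ℝ) (x : ℝ) : fI b 1 x = x + 1 := by
  unfold fI
  simp [Finset.sum_range_succ]
  ring

noncomputable def hiF (b : ℝ) {d : ℕ} (y : Fin d → ℝ) : Fin (d+1) → ℝ := fun i =>
  if h : (i:ℕ) = 0 then 0 else b * y ⟨(i:ℕ)-1, by have := i.isLt; omega⟩

noncomputable def loF (b t : ℝ) {d : ℕ} (y : Fin d → ℝ) : Fin (d+1) → ℝ := fun i =>
  if h : (i:ℕ) < d then y ⟨(i:ℕ), h⟩ / b else t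

lemma hiF_succ (b : ℝ) {d : ℕ} (y : Fin d → ℝ) (i : Fin (d+1)) (h : (i:ℕ) ≠ 0) :
    hiF b y i = b * y ⟨(i:ℕ)-1, by have := i.isLt; omega⟩ := by simp [hiF, h]

lemma loF_lt (b t : ℝ) {d : ℕ} (y : Fin d → ℝ) (i : Fin (d+1)) (h : (i:ℕ) < d) :
    loF b t y i = y ⟨(i:ℕ), h⟩ / b := by simp [loF, h]

lemma loF_last (b t : ℝ) {d : ℕ} (y : Fin d → ℝ) (i : Fin (d+1)) (h : (i:ℕ) = d) :
    loF b t y i = t := by simp [loF, h]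

set_option maxHeartbeats 1000000 in
lemma key (b : ℝ) (hb : 1 < b) : ∀ d : ℕ, ∀ hd : 1 ≤ d, ∃ r : Fin d → ℝ,
    StrictAnti r ∧ (∀ i, r i < 0) ∧ (∀ x : ℝ, fI b d x = ∏ i, (x - r i)) ∧
    (∀ i : Fin d, ∀ h : (i : ℕ) + 1 < d, r ⟨(i : ℕ) + 1, h⟩ / r i > b ^ 2) ∧
    |r ⟨0, hd⟩| ≤ b ^ (-((d : ℤ) - 1)) := by
  have hb0 : (0:ℝ) < b := lt_trans one_pos hb
  have hb2 : (1:ℝ) < b ^ 2 := by nlinarith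
  intro d
  induction d with
  | zero => intro hd; omega
  | succ d IH =>
    intro hd
    rcases Nat.eq_zero_or_pos d with rfl | hd1
    · -- base case d+1 = 1
      refine ⟨fun _ => -1, ?_, ?_, ?_, ?_, ?_⟩
      · intro i j hij
        exact absurd hij (by omega)
      · intro i; norm_num
      · intro x
        rw [fI_one]
        simp
      · intro i h; omega
      · norm_num
    · obtain ⟨y, hyanti, hyneg, hyfact, hyr, hy0⟩ := IH hd1
      have hyanti' : ∀ j k : Fin d, (k : ℕ) ≤ (j : ℕ) → y j ≤ y k := by
        intro j k h
        exact hyanti.antitone h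
      -- consecutive-root gap for y
      have hstep : ∀ (k : ℕ) (hk : k + 1 < d), y ⟨k+1, hk⟩ < b ^ 2 * y ⟨k, by omega⟩ := by
        intro k hk
        have h := hyr ⟨k, by omega⟩ hk
        exact (lt_div_iff_of_neg (hyneg ⟨k, by omega⟩)).mp h
      -- sign of fI b d at b^2 * y k
      have signA : ∀ (k : ℕ) (hk : k < d), 0 < (-1:ℝ)^(k+1) * fI b d (b^2 * y ⟨k, hk⟩) := by
        intro k hk
        rw [hyfact]
        refine prod_sign y _ (k+1) (by omega) ?_ ?_
        · intro j hj
          have hkd : k + 1 < d := lt_of_le_of_lt hj j.isLt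
          calc y j ≤ y ⟨k+1, hkd⟩ := hyanti' j ⟨k+1, hkd⟩ hj
            _ < b^2 * y ⟨k, hk⟩ := hstep k hkd
        · intro j hj
          have h1 : b^2 * y ⟨k, hk⟩ < y ⟨k, hk⟩ := by nlinarith [hyneg ⟨k, hk⟩]
          have h2 : y ⟨k, hk⟩ ≤ y j := hyanti' ⟨k, hk⟩ j (by simpa using Nat.lt_succ_iff.mp hj)
          linarith
      -- sign of fI b d at y k / b^2
      have signB : ∀ (k : ℕ) (hk : k < d), 0 < (-1:ℝ)^k * fI b d (y ⟨k, hk⟩ / b^2) := by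
        intro k hk
        rw [hyfact]
        refine prod_sign y _ k (by omega) ?_ ?_
        · intro j hj
          have hself : y ⟨k, hk⟩ < y ⟨k, hk⟩ / b^2 := by
            rw [lt_div_iff₀ (by positivity)]
            nlinarith [hyneg ⟨k, hk⟩]
          rcases eq_or_lt_of_le hj with he | hlt
          · have : j = ⟨k, hk⟩ := by exact Fin.ext he.symm
            rw [this]; exact hself
          · have hkd : k + 1 < d := lt_of_le_of_lt hlt j.isLt
            have h1 : y j ≤ y ⟨k+1, hkd⟩ := hyanti' j ⟨k+1, hkd⟩ hlt
            have h2 : y ⟨k+1, hkd⟩ < b^2 * y ⟨k, hk⟩ := hstep k hkd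
            have h3 : b^2 * y ⟨k, hk⟩ < y ⟨k, hk⟩ := by nlinarith [hyneg ⟨k, hk⟩]
            linarith
        · intro j hj
          have hk1 : 1 ≤ k := by omega
          have hkm : k - 1 + 1 < d := by omega
          have hkm1 : k - 1 < d := by omega
          have heq : (⟨k - 1 + 1, hkm⟩ : Fin d) = ⟨k, hk⟩ := Fin.ext (show k-1+1 = k by omega)
          have h1 : y ⟨k, hk⟩ < b^2 * y ⟨k-1, hkm1⟩ := by
            have := hstep (k-1) hkm
            rwa [heq] at this
          have h2 : y ⟨k, hk⟩ / b^2 < y ⟨k-1, hkm1⟩ := by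
            rw [div_lt_iff₀ (by positivity)]
            nlinarith
          have h3 : y ⟨k-1, hkm1⟩ ≤ y j := hyanti' ⟨k-1, hkm1⟩ j (by simp; omega)
          linarith
      -- the far-left evaluation point
      set Y := y ⟨d-1, by omega⟩ with hY
      have hYneg : Y < 0 := hyneg _
      set t : ℝ := 2*b*Y - (2*b)^d - 1 with ht
      set lo := loF b t y with hlo
      set hi := hiF b y with hhi
      have h2b : (0:ℝ) < 2*b := by linarith
      have hu : (2*b)^d + 1 ≤ -t := by
        rw [ht]
        nlinarith [mul_pos h2b (neg_pos.mpr hYneg)]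
      have hu0 : (0:ℝ) < -t := lt_of_lt_of_le (by positivity) hu
      have htneg : t < 0 := by linarith
      have hta : ∀ j : Fin d, t ≤ 2*b*y j := by
        intro j
        have h1 : Y ≤ y j := hyanti' ⟨d-1, by omega⟩ j (by simp; have := j.isLt; omega)
        have h2 : 2*b*Y ≤ 2*b*y j := mul_le_mul_of_nonneg_left h1 (le_of_lt h2b)
        nlinarith [pow_pos h2b d]
      have htb : ∀ j : Fin d, b*t < y j := by
        intro j
        have h1 : b*t ≤ b*(2*b*y j) := mul_le_mul_of_nonneg_left (hta j) (le_of_lt hb0)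
        nlinarith [mul_pos (show (0:ℝ) < 2*b^2 - 1 by nlinarith) (neg_pos.mpr (hyneg j))]
      -- continuity
      have hcont : Continuous (fI b (d+1)) := by
        unfold fI
        exact continuous_finset_sum _ (fun i _ => by fun_prop)
      -- sign at hi i
      have hG_hi : ∀ i : Fin (d+1), 0 < (-1:ℝ)^(i:ℕ) * fI b (d+1) (hi i) := by
        intro i
        rcases Nat.eq_zero_or_pos (i:ℕ) with h0 | hpos
        · have he : hi i = 0 := by rw [hhi]; simp [hiF, h0]
          rw [he, fI_zero, h0]
          norm_num
        · have hkd : (i:ℕ) - 1 < d := by have := i.isLt; omega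
          have he : hi i = b * y ⟨(i:ℕ)-1, hkd⟩ := by
            rw [hhi, hiF_succ b y i (by omega)]
          rw [he, fI_rec b hb0 d]
          have e1 : b * (b * y ⟨(i:ℕ)-1, hkd⟩) = b^2 * y ⟨(i:ℕ)-1, hkd⟩ := by ring
          have e2 : b * y ⟨(i:ℕ)-1, hkd⟩ / b = y ⟨(i:ℕ)-1, hkd⟩ := by field_simp
          rw [e1, e2]
          have e3 : fI b d (y ⟨(i:ℕ)-1, hkd⟩) = 0 := by
            rw [hyfact]
            exact Finset.prod_eq_zero (Finset.mem_univ ⟨(i:ℕ)-1, hkd⟩) (sub_self _)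
          rw [e3]
          have := signA ((i:ℕ)-1) hkd
          have hie : (-1:ℝ)^(i:ℕ) = (-1:ℝ)^(((i:ℕ)-1)+1) := by congr 1; omega
          rw [hie]
          linarith [this]
      -- sign at lo i
      have hG_lo : ∀ i : Fin (d+1), 0 < (-1:ℝ)^((i:ℕ)+1) * fI b (d+1) (lo i) := by
        intro i
        rcases lt_or_ge (i:ℕ) d with hid | hid
        · have he : lo i = y ⟨(i:ℕ), hid⟩ / b := by rw [hlo, loF_lt b t y i hid]
          rw [he, fI_rec b hb0 d]
          have e1 : b * (y ⟨(i:ℕ), hid⟩ / b) = y ⟨(i:ℕ), hid⟩ := by field_simp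
          have e2 : y ⟨(i:ℕ), hid⟩ / b / b = y ⟨(i:ℕ), hid⟩ / b^2 := by
            rw [div_div]; ring_nf
          rw [e1, e2]
          have e3 : fI b d (y ⟨(i:ℕ), hid⟩) = 0 := by
            rw [hyfact]
            exact Finset.prod_eq_zero (Finset.mem_univ ⟨(i:ℕ), hid⟩) (sub_self _)
          rw [e3]
          have hS := signB (i:ℕ) hid
          have hyb : y ⟨(i:ℕ), hid⟩ / b < 0 := div_neg_of_neg_of_pos (hyneg _) hb0
          have hbd : (0:ℝ) < b^d := pow_pos hb0 d
          rw [pow_succ]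
          nlinarith [mul_pos (mul_pos hbd (neg_pos.mpr hyb)) hS]
        · -- i = d : the far-left estimate
          have hieq : (i:ℕ) = d := by have := i.isLt; omega
          have he : lo i = t := by rw [hlo, loF_last b t y i hieq]
          rw [he, hieq]
          set s : ℝ := (-1:ℝ)^d with hs
          have hss : s * s = 1 := by
            rw [hs, ← pow_add, ← two_mul, pow_mul]; norm_num
          set A : ℝ := ∏ j : Fin d, (y j - b*t) with hA
          set B : ℝ := ∏ j : Fin d, (b*y j - t) with hB
          have hflip : ∀ g : Fin d → ℝ, (∏ j, (-1 * g j)) = s * ∏ j, g j := by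
            intro g
            rw [Finset.prod_mul_distrib, Finset.prod_const]
            simp [hs]
          have e1 : fI b d (b*t) = s * A := by
            rw [hyfact, hA, ← hflip]
            exact Finset.prod_congr rfl (fun j _ => by ring)
          have e2 : b^d * t * fI b d (t/b) = s * (t * B) := by
            rw [hyfact]
            have f1 : ∏ j : Fin d, (t/b - y j) = s * ∏ j : Fin d, (y j - t/b) := by
              rw [← hflip]
              exact Finset.prod_congr rfl (fun j _ => by ring)
            have f2 : b^d * ∏ j : Fin d, (y j - t/b) = B := by
              rw [hB]
              have : (b:ℝ)^d = ∏ _j : Fin d, b := by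
                rw [Finset.prod_const]; simp
              rw [this, ← Finset.prod_mul_distrib]
              refine Finset.prod_congr rfl (fun j _ => ?_)
              field_simp
            calc b^d * t * (∏ j : Fin d, (t/b - y j))
                = b^d * t * (s * ∏ j : Fin d, (y j - t/b)) := by rw [f1]
              _ = s * t * (b^d * ∏ j : Fin d, (y j - t/b)) := by ring
              _ = s * (t * B) := by rw [f2]; ring
          have emain : (-1:ℝ)^(d+1) * fI b (d+1) t = -A - t*B := by
            rw [fI_rec b hb0 d, e1, e2, pow_succ, hs]
            linear_combination (-(A + t*B)) * hss
          rw [emain]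
          -- bounds
          have hApos : ∀ j : Fin d, 0 < y j - b*t := fun j => by linarith [htb j]
          have hAle : A ≤ ((-t)*b)^d := by
            rw [hA]
            calc ∏ j : Fin d, (y j - b*t) ≤ ∏ _j : Fin d, ((-t)*b) := by
                  refine Finset.prod_le_prod (fun j _ => le_of_lt (hApos j)) (fun j _ => ?_)
                  nlinarith [hyneg j]
              _ = ((-t)*b)^d := by rw [Finset.prod_const]; simp
          have hBge : ((-t)/2)^d ≤ B := by
            rw [hB]
            calc ((-t)/2)^d = ∏ _j : Fin d, ((-t)/2) := by rw [Finset.prod_const]; simp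
              _ ≤ ∏ j : Fin d, (b*y j - t) := by
                  refine Finset.prod_le_prod (fun j _ => by positivity) (fun j _ => ?_)
                  linarith [hta j]
          have hkey : 2^d * b^d + 1 ≤ -t := by rw [← mul_pow]; exact hu
          have hfin : 0 < (-t) * ((-t)/2)^d - ((-t)*b)^d := by
            have h2d : (0:ℝ) < 2^d := by positivity
            have key2 : (-t)^d * (2^d * b^d) < (-t)^d * (-t) :=
              mul_lt_mul_of_pos_left (by linarith) (pow_pos hu0 d)
            have hre : (-t) * ((-t)/2)^d - ((-t)*b)^d
                = ((-t)^d * (-t) - (-t)^d * (2^d * b^d))/2^d := by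
              rw [div_pow, mul_pow]
              field_simp
            rw [hre]
            exact div_pos (by linarith) h2d
          have h5 : (-t) * ((-t)/2)^d ≤ (-t) * B := mul_le_mul_of_nonneg_left hBge (le_of_lt hu0)
          have h8 : (-t)*((-t)/2)^d - ((-t)*b)^d ≤ (-t)*B - A := by linarith [h5, hAle]
          have h9 : (0:ℝ) < (-t)*B - A := lt_of_lt_of_le hfin h8
          have h10 : -A - t*B = (-t)*B - A := by ring
          rw [h10]
          exact h9
      -- ordering of interval endpoints
      have hlohi : ∀ i : Fin (d+1), lo i < hi i := by
        intro i
        rcases Nat.eq_zero_or_pos (i:ℕ) with h0 | hpos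
        · have he : hi i = 0 := by rw [hhi]; simp [hiF, h0]
          have hl : lo i = y ⟨(i:ℕ), by omega⟩ / b := by rw [hlo, loF_lt b t y i (by omega)]
          rw [he, hl]
          exact div_neg_of_neg_of_pos (hyneg _) hb0
        · have hkd : (i:ℕ) - 1 < d := by have := i.isLt; omega
          have he : hi i = b * y ⟨(i:ℕ)-1, hkd⟩ := by rw [hhi, hiF_succ b y i (by omega)]
          rcases lt_or_ge (i:ℕ) d with hid | hid
          · have hl : lo i = y ⟨(i:ℕ), hid⟩ / b := by rw [hlo, loF_lt b t y i hid]
            rw [he, hl]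
            have hgap : y ⟨(i:ℕ), hid⟩ < b^2 * y ⟨(i:ℕ)-1, hkd⟩ := by
              have hkm : (i:ℕ) - 1 + 1 < d := by omega
              have heq : (⟨(i:ℕ)-1+1, hkm⟩ : Fin d) = ⟨(i:ℕ), hid⟩ := Fin.ext (show (i:ℕ)-1+1 = (i:ℕ) by omega)
              have := hstep ((i:ℕ)-1) hkm
              rwa [heq] at this
            rw [div_lt_iff₀ hb0]
            nlinarith
          · have hieq : (i:ℕ) = d := by have := i.isLt; omega
            have hl : lo i = t := by rw [hlo, loF_last b t y i hieq]
            have hYe : (⟨(i:ℕ)-1, hkd⟩ : Fin d) = ⟨d-1, by omega⟩ := Fin.ext (show (i:ℕ)-1 = d-1 by omega)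
            rw [he, hl, hYe]
            have : t < 2*b*Y := by rw [ht]; nlinarith [pow_pos h2b d]
            rw [← hY]
            nlinarith
      have hhile : ∀ i : Fin (d+1), hi i ≤ 0 := by
        intro i
        rcases Nat.eq_zero_or_pos (i:ℕ) with h0 | hpos
        · rw [hhi]; simp [hiF, h0]
        · have hkd : (i:ℕ) - 1 < d := by have := i.isLt; omega
          have he : hi i = b * y ⟨(i:ℕ)-1, hkd⟩ := by rw [hhi, hiF_succ b y i (by omega)]
          rw [he]
          nlinarith [hyneg ⟨(i:ℕ)-1, hkd⟩]
      -- existence of roots by IVT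
      have hex : ∀ i : Fin (d+1), ∃ z, z ∈ Set.Ioo (lo i) (hi i) ∧ fI b (d+1) z = 0 := by
        intro i
        have h1 := hG_hi i
        have h2 := hG_lo i
        rcases Nat.even_or_odd (i:ℕ) with hpar | hpar
        · have hhipos : 0 < fI b (d+1) (hi i) := by
            rwa [hpar.neg_one_pow, one_mul] at h1
          have hloneg : fI b (d+1) (lo i) < 0 := by
            have : Odd ((i:ℕ)+1) := Even.add_one hpar
            rw [this.neg_one_pow] at h2
            linarith
          have hmem : (0:ℝ) ∈ Set.Ioo (fI b (d+1) (lo i)) (fI b (d+1) (hi i)) := ⟨hloneg, hhipos⟩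
          obtain ⟨z, hz, hz0⟩ := intermediate_value_Ioo (le_of_lt (hlohi i))
            hcont.continuousOn hmem
          exact ⟨z, hz, hz0⟩
        · have hhineg : fI b (d+1) (hi i) < 0 := by
            rw [hpar.neg_one_pow] at h1
            linarith
          have hlopos : 0 < fI b (d+1) (lo i) := by
            have : Even ((i:ℕ)+1) := Odd.add_one hpar
            rwa [this.neg_one_pow, one_mul] at h2
          have hmem : (0:ℝ) ∈ Set.Ioo (fI b (d+1) (hi i)) (fI b (d+1) (lo i)) := ⟨hhineg, hlopos⟩
          obtain ⟨z, hz, hz0⟩ := intermediate_value_Ioo' (le_of_lt (hlohi i))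
            hcont.continuousOn hmem
          exact ⟨z, hz, hz0⟩
      choose r hrmem hrroot using hex
      -- strict antitonicity
      have hranti : StrictAnti r := by
        rw [Fin.strictAnti_iff_succ_lt]
        intro i
        have h1 : r i.succ < hi i.succ := (hrmem i.succ).2
        have h2 : lo i.castSucc < r i.castSucc := (hrmem i.castSucc).1
        have he : hi i.succ = b * y i := by
          rw [hhi, hiF_succ b y i.succ (by simp)]
          congr 1
        have hl : lo i.castSucc = y i / b := by
          rw [hlo, loF_lt b t y i.castSucc (by simp [i.isLt])]
          congr 1
        have h3 : b * y i < y i / b := by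
          rw [lt_div_iff₀ hb0]
          nlinarith [hyneg i]
        rw [he] at h1
        rw [hl] at h2
        linarith
      have hrneg : ∀ i, r i < 0 := fun i => lt_of_lt_of_le (hrmem i).2 (hhile i)
      have hrfact := fI_factor b r hranti.injective hrroot
      refine ⟨r, hranti, hrneg, hrfact, ?_, ?_⟩
      · -- ratio bound
        intro i h
        have hkd : (i:ℕ) < d := by omega
        have h1 : r ⟨(i:ℕ)+1, h⟩ < hi ⟨(i:ℕ)+1, h⟩ := (hrmem _).2
        have h2 : lo i < r i := (hrmem i).1
        have he : hi ⟨(i:ℕ)+1, h⟩ = b * y ⟨(i:ℕ), hkd⟩ := by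
          rw [hhi, hiF_succ b y ⟨(i:ℕ)+1, h⟩ (by simp)]
          congr 1
        have hl : lo i = y ⟨(i:ℕ), hkd⟩ / b := by rw [hlo, loF_lt b t y i hkd]
        rw [he] at h1
        rw [hl] at h2
        rw [gt_iff_lt, lt_div_iff_of_neg (hrneg i)]
        have hbb : b^2 * (y ⟨(i:ℕ), hkd⟩ / b) = b * y ⟨(i:ℕ), hkd⟩ := by
          field_simp
        nlinarith [mul_lt_mul_of_pos_left h2 (show (0:ℝ) < b^2 by positivity)]
      · -- largest root bound
        have h2 : lo ⟨0, hd⟩ < r ⟨0, hd⟩ := (hrmem _).1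
        have hl : lo ⟨0, hd⟩ = y ⟨0, hd1⟩ / b := by
          rw [hlo, loF_lt b t y ⟨0, hd⟩ (by simpa using hd1)]
        have hrneg0 : r ⟨0, hd⟩ < 0 := hrneg _
        rw [abs_of_neg hrneg0]
        rw [abs_of_neg (hyneg ⟨0, hd1⟩)] at hy0
        rw [hl] at h2
        have hexp : -(((d+1:ℕ):ℤ) - 1) = (-((d:ℤ)-1)) - 1 := by push_cast; ring
        rw [hexp, zpow_sub_one₀ (ne_of_gt hb0)]
        have hstep4 : -(y ⟨0, hd1⟩ / b) ≤ b ^ (-((d:ℤ)-1)) * b⁻¹ := by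
          rw [← neg_div, div_eq_mul_inv]
          exact mul_le_mul_of_nonneg_right hy0 (by positivity)
        linarith

lemma choose_add_two (i j : ℕ) : (i + j).choose 2 = i.choose 2 + j.choose 2 + i * j := by
  induction j with
  | zero => simp
  | succ j ih =>
    have h1 : i + (j + 1) = (i + j) + 1 := rfl
    rw [h1, Nat.choose_succ_succ (i+j) 1, Nat.choose_succ_succ j 1,
      Nat.choose_one_right, Nat.choose_one_right, Nat.mul_succ, ih]
    ring

lemma choose_split {i d : ℕ} (h : i ≤ d) :
    d.choose 2 = (d - i).choose 2 + i.choose 2 + i * (d - i) := by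
  have := choose_add_two (d - i) i
  rw [Nat.sub_add_cancel h] at this
  rw [this]
  ring

/-- For `b > 1` and `d ≥ 1`, the key polynomial `K_d` has exactly `d` roots
`0 > z₁ > z₂ > ⋯ > z_d`, all simple, real and negative (so that
`K_d(z) = b^{-C(d,2)} Π_i (z - zᵢ)`), consecutive roots satisfy `z_{i+1}/z_i > b²`,
and the largest root satisfies `|z₁| ≤ b^{-(d-1)}`. -/
theorem keyIsing_real_rooted (b : ℝ) (hb : 1 < b) (d : ℕ) (hd : 1 ≤ d) :
    ∃ r : Fin d → ℝ,
      StrictAnti r ∧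
      (∀ i, r i < 0) ∧
      (∀ z : ℂ, keyIsing b d z =
        (b : ℂ) ^ (-((d.choose 2 : ℕ) : ℤ)) * ∏ i : Fin d, (z - (r i : ℂ))) ∧
      (∀ i : Fin d, ∀ h : (i : ℕ) + 1 < d, r ⟨(i : ℕ) + 1, h⟩ / r i > b ^ 2) ∧
      |r ⟨0, hd⟩| ≤ b ^ (-((d : ℤ) - 1)) := by
  have hb0 : (0:ℝ) < b := lt_trans one_pos hb
  have hbC : (b:ℂ) ≠ 0 := by
    simp only [ne_eq, Complex.ofReal_eq_zero]
    exact ne_of_gt hb0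
  obtain ⟨r, h1, h2, h3, h4, h5⟩ := key b hb d hd
  refine ⟨r, h1, h2, ?_, h4, h5⟩
  have hpoly : PI b d = ∏ i : Fin d, (Polynomial.X - Polynomial.C (r i)) := by
    apply Polynomial.funext
    intro x
    rw [PI_eval, Polynomial.eval_prod]
    simp only [Polynomial.eval_sub, Polynomial.eval_X, Polynomial.eval_C]
    exact h3 x
  intro z
  have hmap := congrArg (Polynomial.aeval z) hpoly
  rw [map_prod] at hmap
  simp only [map_sub, Polynomial.aeval_X, Polynomial.aeval_C,
    Complex.coe_algebraMap] at hmap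
  have haeval : (Polynomial.aeval z) (PI b d)
      = ∑ i ∈ Finset.range (d+1), (d.choose i : ℂ) * (b:ℂ) ^ (i * (d - i)) * z ^ i := by
    rw [PI, map_sum]
    refine Finset.sum_congr rfl fun i hi => ?_
    simp only [map_mul, map_pow, Polynomial.aeval_X, Polynomial.aeval_C,
      Complex.coe_algebraMap]
    push_cast
    ring
  rw [← hmap, haeval, keyIsing, Finset.mul_sum]
  refine Finset.sum_congr rfl fun i hi => ?_
  have hid : i ≤ d := Nat.lt_succ_iff.mp (Finset.mem_range.mp hi)
  have hz : (-(((d - i).choose 2 + i.choose 2 : ℕ) : ℤ))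
      = (-((d.choose 2 : ℕ) : ℤ)) + ((i * (d - i) : ℕ) : ℤ) := by
    rw [choose_split hid]
    push_cast
    ring
  rw [hz, zpow_add₀ hbC, zpow_natCast]
  ring
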